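/- Let L be an e-cyclic residuated lattice and let P ≠ L be a prime convex subalgebra of L. Then the following are equivalent: (1) P is a minimal prime convex subalgebra of L; (2) L⁻ \ P is a maximal ideal of the lattice (L⁻, ∨, ∧); (3) P ∩ L⁻ is a minimal prime filter of the lattice (L⁻, ∨, ∧). -/

import Mathlib

universe u

/-- A residuated lattice: a lattice-ordered monoid with left and right residuals.
`ldiv x z` is `x \ z` and `rdiv z y` is `z / y`. -/
class ResiduatedLattice (α : Type u) extends Lattice α, Monoid α where
  ldiv : α → α → α
  rdiv : α → α → α
  mul_le_iff_le_ldiv : ∀ x y z : α, x * y ≤ z ↔ y ≤ ldiv x z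
  mul_le_iff_le_rdiv : ∀ x y z : α, x * y ≤ z ↔ x ≤ rdiv z y

namespace ResiduatedLattice

variable {α : Type u} [ResiduatedLattice α]

/-- `L` is e-cyclic if `x \ e = e / x` for all `x`. -/
def ECyclic (α : Type u) [ResiduatedLattice α] : Prop :=
  ∀ x : α, ldiv x 1 = rdiv 1 x

/-- Absolute value: `|x| = x ⊓ (e / x) ⊓ e`. -/
def absv (x : α) : α := x ⊓ rdiv 1 x ⊓ 1

/-- A convex subalgebra: contains `e`, closed under all the operations, and order-convex. -/
structure IsConvexSubalgebra (H : Set α) : Prop where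
  one_mem : (1 : α) ∈ H
  mul_mem : ∀ ⦃x⦄, x ∈ H → ∀ ⦃y⦄, y ∈ H → x * y ∈ H
  sup_mem : ∀ ⦃x⦄, x ∈ H → ∀ ⦃y⦄, y ∈ H → x ⊔ y ∈ H
  inf_mem : ∀ ⦃x⦄, x ∈ H → ∀ ⦃y⦄, y ∈ H → x ⊓ y ∈ H
  ldiv_mem : ∀ ⦃x⦄, x ∈ H → ∀ ⦃y⦄, y ∈ H → ldiv x y ∈ H
  rdiv_mem : ∀ ⦃x⦄, x ∈ H → ∀ ⦃y⦄, y ∈ H → rdiv x y ∈ H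
  convex : ∀ ⦃a⦄, a ∈ H → ∀ ⦃b⦄, b ∈ H → ∀ ⦃x⦄, a ≤ x → x ≤ b → x ∈ H

/-- `C[S]`: the smallest convex subalgebra containing `S`. -/
def convexClosure (S : Set α) : Set α :=
  ⋂₀ {H : Set α | IsConvexSubalgebra H ∧ S ⊆ H}

end ResiduatedLattice

open ResiduatedLattice

/-- A prime convex subalgebra: a convex subalgebra that is meet-irreducible in the
lattice of convex subalgebras. -/
def IsPrimeConvex {α : Type u} [ResiduatedLattice α] (H : Set α) : Prop :=
  IsConvexSubalgebra H ∧
  ∀ X Y : Set α, IsConvexSubalgebra X → IsConvexSubalgebra Y →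
    X ∩ Y ⊆ H → X ⊆ H ∨ Y ⊆ H

/-- A minimal prime convex subalgebra. -/
def IsMinimalPrimeConvex {α : Type u} [ResiduatedLattice α] (P : Set α) : Prop :=
  IsPrimeConvex P ∧ P ≠ Set.univ ∧
  ∀ Q : Set α, IsPrimeConvex Q → Q ≠ Set.univ → Q ⊆ P → Q = P

/-- The negative cone `L⁻ = {x : x ≤ e}`. -/
def negCone (α : Type u) [ResiduatedLattice α] : Set α := {x : α | x ≤ 1}

/-- An ideal of the lattice `(L⁻, ⊔, ⊓)`. -/
def IsLatIdeal {α : Type u} [ResiduatedLattice α] (I : Set α) : Prop :=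
  I.Nonempty ∧ I ⊆ negCone α ∧
  (∀ x ∈ I, ∀ y ∈ negCone α, y ≤ x → y ∈ I) ∧
  ∀ x ∈ I, ∀ y ∈ I, x ⊔ y ∈ I

/-- A maximal ideal of the lattice `(L⁻, ⊔, ⊓)`. -/
def IsMaximalLatIdeal {α : Type u} [ResiduatedLattice α] (I : Set α) : Prop :=
  IsLatIdeal I ∧ I ≠ negCone α ∧
  ∀ J : Set α, IsLatIdeal J → J ≠ negCone α → I ⊆ J → J = I

/-- A filter of the lattice `(L⁻, ⊔, ⊓)`. -/
def IsLatFilter {α : Type u} [ResiduatedLattice α] (F : Set α) : Prop :=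
  F.Nonempty ∧ F ⊆ negCone α ∧
  (∀ x ∈ F, ∀ y ∈ negCone α, x ≤ y → y ∈ F) ∧
  ∀ x ∈ F, ∀ y ∈ F, x ⊓ y ∈ F

/-- A prime filter of the lattice `(L⁻, ⊔, ⊓)`. -/
def IsPrimeLatFilter {α : Type u} [ResiduatedLattice α] (F : Set α) : Prop :=
  IsLatFilter F ∧ F ≠ negCone α ∧
  ∀ x ∈ negCone α, ∀ y ∈ negCone α, x ⊔ y ∈ F → x ∈ F ∨ y ∈ F

/-- A minimal prime filter of the lattice `(L⁻, ⊔, ⊓)`. -/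
def IsMinimalPrimeLatFilter {α : Type u} [ResiduatedLattice α] (F : Set α) : Prop :=
  IsPrimeLatFilter F ∧ ∀ G : Set α, IsPrimeLatFilter G → G ⊆ F → G = F

/-!
For e-cyclic `L` a convex subalgebra `H` is determined by its negative part, since `x ∈ H` iff
`|x| ∈ H`. Conversely, if `S ⊆ L⁻` is upward closed in `L⁻` and closed under `*`, then
`absv ⁻¹' S` is a convex subalgebra, because `|x||y| ⊓ |y||x|` lies below `|xy|`, `|x\y|` and
`|x/y|`. Taking for `S` the upper set of the powers of `a`, and using
`(a ⊔ b)^(m+n) ≤ a^m ⊔ b^n`, primeness of `P` gives `a ⊔ b ∈ P → a ∈ P ∨ b ∈ P` on `L⁻`, so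
`P ∩ L⁻` is a prime filter whose complement is the ideal `L⁻ \ P`. Then (2) ⇒ (3) is lattice
theory, and (3) ⇒ (1) because `Q ⊆ P` gives `Q ∩ L⁻ ⊆ P ∩ L⁻`. For (1) ⇒ (2), extend a proper
ideal `J ⊇ L⁻ \ P` to an ideal `M` maximal among those omitting `1`; maximality makes `L⁻ \ M`
closed under `*`, so `absv ⁻¹' (L⁻ \ M)` is a prime convex subalgebra inside `P`, hence equal
to `P` by minimality, which forces `J = L⁻ \ P`.
-/

namespace ResiduatedLattice

variable {α : Type u} [ResiduatedLattice α]

theorem le_ldiv_iff_mul_le {x y z : α} : y ≤ ldiv x z ↔ x * y ≤ z :=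
  (mul_le_iff_le_ldiv x y z).symm

theorem le_rdiv_iff_mul_le {x y z : α} : x ≤ rdiv z y ↔ x * y ≤ z :=
  (mul_le_iff_le_rdiv x y z).symm

instance : MulLeftMono α :=
  ⟨fun _ _ _ h => le_ldiv_iff_mul_le.1 (h.trans (le_ldiv_iff_mul_le.2 le_rfl))⟩

instance : MulRightMono α :=
  ⟨fun _ _ _ h => le_rdiv_iff_mul_le.1 (h.trans (le_rdiv_iff_mul_le.2 le_rfl))⟩

protected theorem mul_sup (a b c : α) : a * (b ⊔ c) = a * b ⊔ a * c :=
  le_antisymm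
    (le_ldiv_iff_mul_le.1 <|
      sup_le (le_ldiv_iff_mul_le.2 le_sup_left) (le_ldiv_iff_mul_le.2 le_sup_right))
    (sup_le (mul_le_mul_right le_sup_left a) (mul_le_mul_right le_sup_right a))

protected theorem sup_mul (a b c : α) : (a ⊔ b) * c = a * c ⊔ b * c :=
  le_antisymm
    (le_rdiv_iff_mul_le.1 <|
      sup_le (le_rdiv_iff_mul_le.2 le_sup_left) (le_rdiv_iff_mul_le.2 le_sup_right))
    (sup_le (mul_le_mul_left le_sup_left c) (mul_le_mul_left le_sup_right c))

theorem mul_le_inf_of_le_one {u v : α} (hu : u ≤ 1) (hv : v ≤ 1) : u * v ≤ u ⊓ v :=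
  le_inf (mul_le_of_le_one_right' hv) (mul_le_of_le_one_left' hu)

theorem sup_mul_sup_le {j u v : α} (hj : j ≤ 1) (hu : u ≤ 1) (hv : v ≤ 1) :
    (j ⊔ u) * (j ⊔ v) ≤ j ⊔ u * v := by
  rw [ResiduatedLattice.sup_mul, ResiduatedLattice.mul_sup, ResiduatedLattice.mul_sup]
  exact sup_le (sup_le (le_sup_of_le_left (mul_le_of_le_one_right' hj))
      (le_sup_of_le_left (mul_le_of_le_one_right' hv)))
    (sup_le (le_sup_of_le_left (mul_le_of_le_one_left' hu)) le_sup_right)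

theorem sup_pow_add_le {a b : α} (ha : a ≤ 1) (hb : b ≤ 1) (m n : ℕ) :
    (a ⊔ b) ^ (m + n) ≤ a ^ m ⊔ b ^ n := by
  suffices ∀ k m n, m + n = k → (a ⊔ b) ^ k ≤ a ^ m ⊔ b ^ n from this _ m n rfl
  intro k
  induction k with
  | zero =>
    rintro m n hmn
    obtain ⟨rfl, rfl⟩ : m = 0 ∧ n = 0 := by omega
    simp
  | succ k ih =>
    have hab : (a ⊔ b) ^ (k + 1) ≤ 1 := pow_le_one' (sup_le ha hb) _
    rintro (_ | m) (_ | n) hmn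
    · exact hab.trans (le_sup_of_le_left (pow_zero a).ge)
    · exact hab.trans (le_sup_of_le_left (pow_zero a).ge)
    · exact hab.trans (le_sup_of_le_right (pow_zero b).ge)
    rw [pow_succ, ResiduatedLattice.mul_sup]
    refine sup_le ?_ ?_
    · calc (a ⊔ b) ^ k * a ≤ (a ^ m ⊔ b ^ (n + 1)) * a :=
            mul_le_mul_left (ih m (n + 1) (by omega)) a
        _ ≤ a ^ (m + 1) ⊔ b ^ (n + 1) := by
            rw [ResiduatedLattice.sup_mul, ← pow_succ]
            exact sup_le_sup_left (mul_le_of_le_one_right' ha) _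
    · calc (a ⊔ b) ^ k * b ≤ (a ^ (m + 1) ⊔ b ^ n) * b :=
            mul_le_mul_left (ih (m + 1) n (by omega)) b
        _ ≤ a ^ (m + 1) ⊔ b ^ (n + 1) := by
            rw [ResiduatedLattice.sup_mul, ← pow_succ]
            exact sup_le_sup_right (mul_le_of_le_one_right' hb) _

theorem mul_le_one_comm (hec : ECyclic α) {x y : α} : x * y ≤ 1 ↔ y * x ≤ 1 := by
  rw [← le_rdiv_iff_mul_le, ← hec, le_ldiv_iff_mul_le]

theorem le_absv_iff {w x : α} : w ≤ absv x ↔ w ≤ x ∧ w * x ≤ 1 ∧ w ≤ 1 := by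
  simp only [absv, le_inf_iff, le_rdiv_iff_mul_le, and_assoc]

theorem absv_le_self (x : α) : absv x ≤ x := (le_absv_iff.1 le_rfl).1

theorem absv_mul_self_le_one (x : α) : absv x * x ≤ 1 := (le_absv_iff.1 le_rfl).2.1

theorem absv_le_one (x : α) : absv x ≤ 1 := (le_absv_iff.1 le_rfl).2.2

theorem absv_of_le_one {x : α} (h : x ≤ 1) : absv x = x :=
  (absv_le_self x).antisymm (le_absv_iff.2 ⟨le_rfl, mul_le_one' h h, h⟩)

theorem inf_absv_le_absv_of_le_of_le {a b x : α} (ha : a ≤ x) (hb : x ≤ b) :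
    absv a ⊓ absv b ≤ absv x :=
  le_absv_iff.2 ⟨inf_le_left.trans ((absv_le_self a).trans ha),
    (mul_le_mul' inf_le_right hb).trans (absv_mul_self_le_one b),
    inf_le_left.trans (absv_le_one a)⟩

theorem inf_absv_le_absv_sup (x y : α) : absv x ⊓ absv y ≤ absv (x ⊔ y) :=
  le_absv_iff.2 ⟨inf_le_left.trans ((absv_le_self x).trans le_sup_left), by
    rw [ResiduatedLattice.mul_sup]
    exact sup_le ((mul_le_mul_left inf_le_left x).trans (absv_mul_self_le_one x))
      ((mul_le_mul_left inf_le_right y).trans (absv_mul_self_le_one y)),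
    inf_le_left.trans (absv_le_one x)⟩

theorem inf_absv_le_absv_inf (x y : α) : absv x ⊓ absv y ≤ absv (x ⊓ y) :=
  le_absv_iff.2 ⟨inf_le_inf (absv_le_self x) (absv_le_self y),
    (mul_le_mul' inf_le_left inf_le_left).trans (absv_mul_self_le_one x),
    inf_le_left.trans (absv_le_one x)⟩

theorem mul_absv_inf_le_absv_mul (x y : α) :
    absv x * absv y ⊓ absv y * absv x ≤ absv (x * y) := by
  refine le_absv_iff.2 ⟨inf_le_left.trans (mul_le_mul' (absv_le_self x) (absv_le_self y)),
    ?_, inf_le_left.trans (mul_le_one' (absv_le_one x) (absv_le_one y))⟩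
  calc (absv x * absv y ⊓ absv y * absv x) * (x * y)
      = (absv x * absv y ⊓ absv y * absv x) * x * y := (mul_assoc _ _ _).symm
    _ ≤ absv y * absv x * x * y := mul_le_mul_left (mul_le_mul_left inf_le_right x) y
    _ ≤ absv y * y := by
        rw [mul_assoc (absv y)]
        exact mul_le_mul_left (mul_le_of_le_one_right' (absv_mul_self_le_one x)) y
    _ ≤ 1 := absv_mul_self_le_one y

theorem mul_absv_inf_le_absv_ldiv (hec : ECyclic α) (x y : α) :
    absv x * absv y ⊓ absv y * absv x ≤ absv (ldiv x y) := by
  have hxr : x * ldiv x y ≤ y := le_ldiv_iff_mul_le.1 le_rfl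
  have hxu : x * absv x ≤ 1 := (mul_le_one_comm hec).1 (absv_mul_self_le_one x)
  have hyv : y * absv y ≤ 1 := (mul_le_one_comm hec).1 (absv_mul_self_le_one y)
  refine le_absv_iff.2 ⟨inf_le_left.trans (le_ldiv_iff_mul_le.2 ?_), ?_,
    inf_le_left.trans (mul_le_one' (absv_le_one x) (absv_le_one y))⟩
  · calc x * (absv x * absv y) = x * absv x * absv y := (mul_assoc _ _ _).symm
      _ ≤ absv y := mul_le_of_le_one_left' hxu
      _ ≤ y := absv_le_self y
  · have hrvx : ldiv x y * absv y * x ≤ 1 := by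
      refine (mul_le_one_comm hec).1 ?_
      calc x * (ldiv x y * absv y) = x * ldiv x y * absv y := (mul_assoc _ _ _).symm
        _ ≤ y * absv y := mul_le_mul_left hxr _
        _ ≤ 1 := hyv
    refine (mul_le_one_comm hec).2 ?_
    calc ldiv x y * (absv x * absv y ⊓ absv y * absv x)
        ≤ ldiv x y * absv y * absv x := by
          rw [mul_assoc]; exact mul_le_mul_right inf_le_right _
      _ ≤ ldiv x y * absv y * x := mul_le_mul_right (absv_le_self x) _
      _ ≤ 1 := hrvx

theorem mul_absv_inf_le_absv_rdiv (hec : ECyclic α) (x y : α) :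
    absv x * absv y ⊓ absv y * absv x ≤ absv (rdiv x y) := by
  have hry : rdiv x y * y ≤ x := le_rdiv_iff_mul_le.1 le_rfl
  have hxu : x * absv x ≤ 1 := (mul_le_one_comm hec).1 (absv_mul_self_le_one x)
  refine le_absv_iff.2 ⟨inf_le_left.trans (le_rdiv_iff_mul_le.2 ?_), ?_,
    inf_le_left.trans (mul_le_one' (absv_le_one x) (absv_le_one y))⟩
  · calc absv x * absv y * y = absv x * (absv y * y) := mul_assoc _ _ _
      _ ≤ absv x := mul_le_of_le_one_right' (absv_mul_self_le_one y)
      _ ≤ x := absv_le_self x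
  · refine (mul_le_one_comm hec).2 ?_
    calc rdiv x y * (absv x * absv y ⊓ absv y * absv x)
        ≤ rdiv x y * absv y * absv x := by
          rw [mul_assoc]; exact mul_le_mul_right inf_le_right _
      _ ≤ x * absv x := mul_le_mul_left ((mul_le_mul_right (absv_le_self y) _).trans hry) _
      _ ≤ 1 := hxu

theorem IsConvexSubalgebra.absv_mem {H : Set α} (hH : IsConvexSubalgebra H) {x : α}
    (hx : x ∈ H) : absv x ∈ H :=
  hH.inf_mem (hH.inf_mem hx (hH.rdiv_mem hH.one_mem hx)) hH.one_mem

theorem IsConvexSubalgebra.absv_mem_iff (hec : ECyclic α) {H : Set α}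
    (hH : IsConvexSubalgebra H) {x : α} : absv x ∈ H ↔ x ∈ H :=
  ⟨fun h => hH.convex h (hH.rdiv_mem hH.one_mem h) (absv_le_self x)
    (le_rdiv_iff_mul_le.2 ((mul_le_one_comm hec).1 (absv_mul_self_le_one x))), hH.absv_mem⟩

theorem IsConvexSubalgebra.pow_mem {H : Set α} (hH : IsConvexSubalgebra H) {a : α}
    (ha : a ∈ H) (n : ℕ) : a ^ n ∈ H := by
  induction n with
  | zero => simpa using hH.one_mem
  | succ n ih => simpa [pow_succ] using hH.mul_mem ih ha

/-- `S` need not lie in `L⁻`: only `S ∩ L⁻` matters. -/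
structure IsMulFilter (S : Set α) : Prop where
  one_mem : (1 : α) ∈ S
  mul_mem : ∀ ⦃u⦄, u ∈ S → ∀ ⦃v⦄, v ∈ S → u * v ∈ S
  mem_of_le : ∀ ⦃u⦄, u ∈ S → ∀ ⦃v⦄, u ≤ v → v ≤ 1 → v ∈ S

theorem IsMulFilter.absv_mem_of_le {S : Set α} (hS : IsMulFilter S) {x y z : α}
    (hx : absv x ∈ S) (hy : absv y ∈ S) (hz : absv x * absv y ⊓ absv y * absv x ≤ absv z) :
    absv z ∈ S := by
  have hxy := mul_le_one' (absv_le_one x) (absv_le_one y)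
  have hyx := mul_le_one' (absv_le_one y) (absv_le_one x)
  exact hS.mem_of_le (hS.mul_mem (hS.mul_mem hx hy) (hS.mul_mem hy hx))
    ((mul_le_inf_of_le_one hxy hyx).trans hz) (absv_le_one z)

theorem IsMulFilter.isConvexSubalgebra_preimage (hec : ECyclic α) {S : Set α}
    (hS : IsMulFilter S) : IsConvexSubalgebra (absv ⁻¹' S) := by
  have of_inf_le {x y z : α} (hx : absv x ∈ S) (hy : absv y ∈ S)
      (hz : absv x ⊓ absv y ≤ absv z) : absv z ∈ S :=
    hS.absv_mem_of_le hx hy <| inf_le_left.trans <|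
      (mul_le_inf_of_le_one (absv_le_one x) (absv_le_one y)).trans hz
  exact {
    one_mem := by simpa [Set.mem_preimage, absv_of_le_one le_rfl] using hS.one_mem
    mul_mem := fun x hx y hy => hS.absv_mem_of_le hx hy (mul_absv_inf_le_absv_mul x y)
    sup_mem := fun x hx y hy => of_inf_le hx hy (inf_absv_le_absv_sup x y)
    inf_mem := fun x hx y hy => of_inf_le hx hy (inf_absv_le_absv_inf x y)
    ldiv_mem := fun x hx y hy => hS.absv_mem_of_le hx hy (mul_absv_inf_le_absv_ldiv hec x y)
    rdiv_mem := fun x hx y hy => hS.absv_mem_of_le hx hy (mul_absv_inf_le_absv_rdiv hec x y)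
    convex := fun a ha b hb _ hax hxb => of_inf_le ha hb (inf_absv_le_absv_of_le_of_le hax hxb) }

theorem isMulFilter_setOf_pow_le (a : α) : IsMulFilter {y : α | ∃ n : ℕ, a ^ n ≤ y} where
  one_mem := ⟨0, (pow_zero a).le⟩
  mul_mem := fun _ ⟨m, hm⟩ _ ⟨n, hn⟩ => ⟨m + n, pow_add a m n ▸ mul_le_mul' hm hn⟩
  mem_of_le := fun _ ⟨n, hn⟩ _ huv _ => ⟨n, hn.trans huv⟩

theorem IsMulFilter.isPrimeConvex_preimage (hec : ECyclic α) {S : Set α} (hS : IsMulFilter S)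
    (hprime : ∀ u v : α, u ≤ 1 → v ≤ 1 → u ⊔ v ∈ S → u ∈ S ∨ v ∈ S) :
    IsPrimeConvex (absv ⁻¹' S) := by
  refine ⟨hS.isConvexSubalgebra_preimage hec, fun X Y hX hY hXY => ?_⟩
  by_contra! h
  obtain ⟨x, hxX, hx⟩ := Set.not_subset.1 h.1
  obtain ⟨y, hyY, hy⟩ := Set.not_subset.1 h.2
  have hs : absv x ⊔ absv y ≤ 1 := sup_le (absv_le_one x) (absv_le_one y)
  have hsS : absv (absv x ⊔ absv y) ∈ S :=
    hXY ⟨hX.convex (hX.absv_mem hxX) hX.one_mem le_sup_left hs,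
      hY.convex (hY.absv_mem hyY) hY.one_mem le_sup_right hs⟩
  rw [absv_of_le_one hs] at hsS
  exact (hprime _ _ (absv_le_one x) (absv_le_one y) hsS).elim hx hy

end ResiduatedLattice

section

variable {α : Type u} [ResiduatedLattice α]

theorem IsPrimeConvex.mem_or_mem_of_sup_mem (hec : ECyclic α) {P : Set α}
    (hP : IsPrimeConvex P) {a b : α} (ha : a ≤ 1) (hb : b ≤ 1) (hab : a ⊔ b ∈ P) :
    a ∈ P ∨ b ∈ P := by
  -- for `c ≤ 1`, `C c` is the convex subalgebra generated by `c`
  let C : α → Set α := fun c => absv ⁻¹' {y | ∃ n : ℕ, c ^ n ≤ y}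
  have hC (c : α) : IsConvexSubalgebra (C c) :=
    (isMulFilter_setOf_pow_le c).isConvexSubalgebra_preimage hec
  have self_mem {c : α} (hc : c ≤ 1) : c ∈ C c := ⟨1, by rw [pow_one, absv_of_le_one hc]⟩
  have hCP : C a ∩ C b ⊆ P := by
    rintro x ⟨⟨m, hm⟩, ⟨n, hn⟩⟩
    refine (hP.1.absv_mem_iff hec).1 <|
      hP.1.convex (hP.1.pow_mem hab (m + n)) hP.1.one_mem ?_ (absv_le_one x)
    exact (sup_pow_add_le ha hb m n).trans (sup_le hm hn)
  exact (hP.2 _ _ (hC a) (hC b) hCP).imp (· (self_mem ha)) (· (self_mem hb))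

theorem IsPrimeConvex.isPrimeLatFilter_inter_negCone (hec : ECyclic α) {P : Set α}
    (hP : IsPrimeConvex P) (hP' : P ≠ Set.univ) : IsPrimeLatFilter (P ∩ negCone α) := by
  refine ⟨⟨⟨1, hP.1.one_mem, le_rfl⟩, Set.inter_subset_right, ?_, ?_⟩, ?_, ?_⟩
  · rintro x ⟨hxP, -⟩ y hy hxy
    exact ⟨hP.1.convex hxP hP.1.one_mem hxy hy, hy⟩
  · rintro x ⟨hxP, hx⟩ y ⟨hyP, -⟩
    exact ⟨hP.1.inf_mem hxP hyP, inf_le_left.trans hx⟩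
  · refine fun h => hP' (Set.eq_univ_of_forall fun x => (hP.1.absv_mem_iff hec).1 ?_)
    exact (h.symm ▸ absv_le_one x : absv x ∈ P ∩ negCone α).1
  · exact fun x hx y hy hxy =>
      (hP.mem_or_mem_of_sup_mem hec hx hy hxy.1).imp (⟨·, hx⟩) (⟨·, hy⟩)

theorem IsLatIdeal.eq_negCone_of_one_mem {J : Set α} (hJ : IsLatIdeal J) (h : (1 : α) ∈ J) :
    J = negCone α :=
  hJ.2.1.antisymm fun y hy => hJ.2.2.1 1 h y hy hy

theorem IsPrimeLatFilter.isLatIdeal_negCone_diff {F : Set α} (hF : IsPrimeLatFilter F) :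
    IsLatIdeal (negCone α \ F) := by
  obtain ⟨⟨-, hFsub, hFup, -⟩, hFne, hFprime⟩ := hF
  refine ⟨Set.sdiff_nonempty.2 fun h => hFne (hFsub.antisymm h), Set.sdiff_subset, ?_, ?_⟩
  · rintro x ⟨hx, hxF⟩ y hy hyx
    exact ⟨hy, fun hyF => hxF (hFup y hyF x hx hyx)⟩
  · rintro x ⟨hx, hxF⟩ y ⟨hy, hyF⟩
    exact ⟨sup_le hx hy, fun h => (hFprime x hx y hy h).elim hxF hyF⟩

theorem IsPrimeLatFilter.isMinimalPrimeLatFilter_of_isMaximalLatIdeal {F : Set α}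
    (hF : IsPrimeLatFilter F) (hI : IsMaximalLatIdeal (negCone α \ F)) :
    IsMinimalPrimeLatFilter F := by
  refine ⟨hF, fun G hG hGF => hGF.antisymm fun x hxF => ?_⟩
  by_contra hxG
  obtain ⟨g, hg⟩ := hG.1.1
  have hG' : negCone α \ G ≠ negCone α :=
    (ne_of_mem_of_not_mem' (hG.1.2.1 hg) fun h => h.2 hg).symm
  have hGF' : negCone α \ G = negCone α \ F :=
    hI.2.2 _ hG.isLatIdeal_negCone_diff hG' (Set.sdiff_subset_sdiff_right hGF)
  exact (hGF' ▸ ⟨hF.1.2.1 hxF, hxG⟩ : x ∈ negCone α \ F).2 hxF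

theorem IsLatIdeal.exists_maximal {J : Set α} (hJ : IsLatIdeal J) (h1 : (1 : α) ∉ J) :
    ∃ M, J ⊆ M ∧ Maximal (fun K : Set α => IsLatIdeal K ∧ (1 : α) ∉ K) M := by
  refine zorn_subset_nonempty {K : Set α | IsLatIdeal K ∧ (1 : α) ∉ K} ?_ J ⟨hJ, h1⟩
  rintro c hc hchain ⟨K, hK⟩
  refine ⟨⋃₀ c, ⟨⟨?_, ?_, ?_, ?_⟩, ?_⟩, fun K hK => Set.subset_sUnion_of_mem hK⟩
  · obtain ⟨x, hx⟩ := (hc hK).1.1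
    exact ⟨x, K, hK, hx⟩
  · rintro x ⟨K, hK, hx⟩
    exact (hc hK).1.2.1 hx
  · rintro x ⟨K, hK, hx⟩ y hy hyx
    exact ⟨K, hK, (hc hK).1.2.2.1 x hx y hy hyx⟩
  · rintro x ⟨K, hK, hx⟩ y ⟨K', hK', hy⟩
    rcases hchain.total hK hK' with h | h
    · exact ⟨K', hK', (hc hK').1.2.2.2 x (h hx) y hy⟩
    · exact ⟨K, hK, (hc hK).1.2.2.2 x hx y (h hy)⟩
  · rintro ⟨K, hK, h1K⟩
    exact (hc hK).2 h1K

theorem exists_one_le_sup_of_maximal {M : Set α}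
    (hM : Maximal (fun K : Set α => IsLatIdeal K ∧ (1 : α) ∉ K) M) {w : α} (hw : w ≤ 1)
    (hwM : w ∉ M) : ∃ j ∈ M, 1 ≤ j ⊔ w := by
  by_contra! h
  obtain ⟨⟨⟨j₀, hj₀⟩, hMsub, hMdown, hMsup⟩, -⟩ := hM.1
  -- the ideal generated by `M ∪ {w}`
  let K := {z : α | z ≤ 1 ∧ ∃ j ∈ M, z ≤ j ⊔ w}
  have hK : IsLatIdeal K ∧ (1 : α) ∉ K := by
    refine ⟨⟨⟨j₀, hMsub hj₀, j₀, hj₀, le_sup_left⟩, fun z hz => hz.1, ?_, ?_⟩, ?_⟩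
    · rintro x ⟨-, i, hi, hxi⟩ y hy hyx
      exact ⟨hy, i, hi, hyx.trans hxi⟩
    · rintro x ⟨hx, i, hi, hxi⟩ y ⟨hy, k, hk, hyk⟩
      exact ⟨sup_le hx hy, i ⊔ k, hMsup i hi k hk,
        sup_le (hxi.trans (sup_le_sup_right le_sup_left w))
          (hyk.trans (sup_le_sup_right le_sup_right w))⟩
    · rintro ⟨-, i, hi, h1i⟩
      exact h i hi h1i
  exact hwM (hM.2 hK (fun z hz => ⟨hMsub hz, z, hz, le_sup_left⟩) ⟨hw, j₀, hj₀, le_sup_right⟩)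

theorem isMulFilter_negCone_diff_of_maximal {M : Set α}
    (hM : Maximal (fun K : Set α => IsLatIdeal K ∧ (1 : α) ∉ K) M) :
    IsMulFilter (negCone α \ M) := by
  obtain ⟨⟨-, hMsub, hMdown, hMsup⟩, h1M⟩ := hM.1
  refine ⟨⟨le_rfl, h1M⟩, ?_, ?_⟩
  · rintro u ⟨hu, huM⟩ v ⟨hv, hvM⟩
    obtain ⟨j₁, hj₁, h₁⟩ := exists_one_le_sup_of_maximal hM hu huM
    obtain ⟨j₂, hj₂, h₂⟩ := exists_one_le_sup_of_maximal hM hv hvM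
    have hj := hMsup j₁ hj₁ j₂ hj₂
    refine ⟨mul_le_one' hu hv, fun huv => h1M (hMdown _ (hMsup _ hj _ huv) 1 le_rfl ?_)⟩
    calc (1 : α) = 1 * 1 := (one_mul 1).symm
      _ ≤ (j₁ ⊔ j₂ ⊔ u) * (j₁ ⊔ j₂ ⊔ v) :=
        mul_le_mul' (h₁.trans (sup_le_sup_right le_sup_left u))
          (h₂.trans (sup_le_sup_right le_sup_right v))
      _ ≤ j₁ ⊔ j₂ ⊔ u * v := sup_mul_sup_le (hMsub hj) hu hv
  · rintro u ⟨-, huM⟩ v huv hv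
    exact ⟨hv, fun hvM => huM (hMdown v hvM u (huv.trans hv) huv)⟩

theorem IsLatIdeal.exists_isPrimeConvex_absv_notMem (hec : ECyclic α) {J : Set α}
    (hJ : IsLatIdeal J) (h1 : (1 : α) ∉ J) :
    ∃ Q : Set α, IsPrimeConvex Q ∧ ∀ x ∈ Q, absv x ∉ J := by
  obtain ⟨M, hJM, hM⟩ := hJ.exists_maximal h1
  refine ⟨absv ⁻¹' (negCone α \ M),
    (isMulFilter_negCone_diff_of_maximal hM).isPrimeConvex_preimage hec ?_,
    fun x hx hxJ => hx.2 (hJM hxJ)⟩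
  rintro u v hu hv ⟨-, huv⟩
  refine or_iff_not_imp_left.2 fun hu' => ⟨hv, fun hvM => huv (hM.1.1.2.2.2 u ?_ v hvM)⟩
  exact by_contra fun huM => hu' ⟨hu, huM⟩

theorem IsMinimalPrimeConvex.isMaximalLatIdeal_negCone_diff (hec : ECyclic α) {P : Set α}
    (hP : IsMinimalPrimeConvex P) : IsMaximalLatIdeal (negCone α \ P) := by
  obtain ⟨hPp, hPu, hmin⟩ := hP
  have hI := (hPp.isPrimeLatFilter_inter_negCone hec hPu).isLatIdeal_negCone_diff
  rw [Set.sdiff_inter_self_eq_sdiff] at hI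
  have h1 : (1 : α) ∉ negCone α \ P := fun h => h.2 hPp.1.one_mem
  refine ⟨hI, (ne_of_mem_of_not_mem' (le_rfl : (1 : α) ∈ negCone α) h1).symm,
    fun J hJ hJne hIJ => ?_⟩
  obtain ⟨Q, hQ, hQJ⟩ :=
    hJ.exists_isPrimeConvex_absv_notMem hec fun h1J => hJne (hJ.eq_negCone_of_one_mem h1J)
  have absv_mem_J {z : α} (hz : z ∈ J) : absv z ∈ J := by rwa [absv_of_le_one (hJ.2.1 hz)]
  have hQP : Q ⊆ P := fun x hx => (hPp.1.absv_mem_iff hec).1 <|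
    by_contra fun h => hQJ x hx (hIJ ⟨absv_le_one x, h⟩)
  obtain ⟨j, hj⟩ := hJ.1
  have hQP' := hmin Q hQ (fun h => hQJ j (h ▸ Set.mem_univ j) (absv_mem_J hj)) hQP
  exact Set.Subset.antisymm
    (fun z hz => ⟨hJ.2.1 hz, fun hzP => hQJ z (hQP' ▸ hzP) (absv_mem_J hz)⟩) hIJ

theorem IsPrimeConvex.isMinimalPrimeLatFilter_inter_negCone (hec : ECyclic α) {P : Set α}
    (hP : IsPrimeConvex P) (hP' : P ≠ Set.univ) (hI : IsMaximalLatIdeal (negCone α \ P)) :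
    IsMinimalPrimeLatFilter (P ∩ negCone α) :=
  (hP.isPrimeLatFilter_inter_negCone hec hP').isMinimalPrimeLatFilter_of_isMaximalLatIdeal
    (by rwa [Set.sdiff_inter_self_eq_sdiff])

theorem IsPrimeConvex.isMinimalPrimeConvex_of_isMinimalPrimeLatFilter (hec : ECyclic α)
    {P : Set α} (hP : IsPrimeConvex P) (hP' : P ≠ Set.univ)
    (hF : IsMinimalPrimeLatFilter (P ∩ negCone α)) : IsMinimalPrimeConvex P := by
  refine ⟨hP, hP', fun Q hQ hQ' hQP => hQP.antisymm fun x hx => ?_⟩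
  have hQF := hF.2 _ (hQ.isPrimeLatFilter_inter_negCone hec hQ')
    (Set.inter_subset_inter_left _ hQP)
  have hxQ : absv x ∈ Q ∩ negCone α := hQF ▸ ⟨hP.1.absv_mem hx, absv_le_one x⟩
  exact (hQ.1.absv_mem_iff hec).1 hxQ.1

end

/-- a proper prime convex subalgebra is minimal prime iff `L⁻ \ P` is a
maximal lattice ideal of `L⁻` iff `P ∩ L⁻` is a minimal prime lattice filter of `L⁻`. -/
theorem stmt15 {α : Type u} [ResiduatedLattice α] (hec : ECyclic α)
    (P : Set α) (hP : IsPrimeConvex P) (hP' : P ≠ Set.univ) :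
    List.TFAE [
      IsMinimalPrimeConvex P,
      IsMaximalLatIdeal (negCone α \ P),
      IsMinimalPrimeLatFilter (P ∩ negCone α)] := by
  tfae_have 1 → 2 := fun h => h.isMaximalLatIdeal_negCone_diff hec
  tfae_have 2 → 3 := hP.isMinimalPrimeLatFilter_inter_negCone hec hP'
  tfae_have 3 → 1 := hP.isMinimalPrimeConvex_of_isMinimalPrimeLatFilter hec hP'
  tfae_finish
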